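/- Let G = (S₁, S₂, E, w) be a game with initial state s₀, let W be the largest absolute weight of G, and let G' be the sign-reversed game obtained from G by replacing w with −w. The following four assertions are equivalent: (A) there exists c₀ ∈ ℕ such that player 1 has a winning strategy from s₀ for Lower(c₀) in G; (B) player 1 has a winning strategy from s₀ for MeanPayOff(0) in G'; (C) player 1 has a winning strategy from s₀ for TotalPayOff(2·(|S|−1)·W) in G'; (D) there exists t ∈ ℤ such that player 1 has a winning strategy from s₀ for TotalPayOff(t) in G'. -/

import Mathlib

open Filter

noncomputable section

/-- A two-player turn-based game on a (finite) state space `S`: `p1 s` holds iff state `s`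
belongs to player 1 (otherwise it belongs to player 2), `E` is the edge relation (every state
has a successor), and `w` assigns an integer weight to every edge. -/
structure Game (S : Type) where
  p1 : S → Prop
  E : S → S → Prop
  w : S → S → ℤ
  succ : ∀ s, ∃ t, E s t

variable {S : Type}

/-- `π` is a play of `G` starting from `s₀`. -/
def IsPlay (G : Game S) (s₀ : S) (π : ℕ → S) : Prop :=
  π 0 = s₀ ∧ ∀ n, G.E (π n) (π (n + 1))

/-- Energy level of the play `π` at position `n`. -/
def ELp (G : Game S) (π : ℕ → S) (n : ℕ) : ℤ :=
  ∑ i ∈ Finset.range n, G.w (π i) (π (i + 1))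

/-- Average-energy of a play (limsup variant), in the extended reals. -/
def AEsupP (G : Game S) (π : ℕ → S) : EReal :=
  limsup (fun n : ℕ => (((∑ i ∈ Finset.range n, (ELp G π (i + 1) : ℝ)) / n : ℝ) : EReal)) atTop

/-- Average-energy of a play (liminf variant). -/
def AEinfP (G : Game S) (π : ℕ → S) : EReal :=
  liminf (fun n : ℕ => (((∑ i ∈ Finset.range n, (ELp G π (i + 1) : ℝ)) / n : ℝ) : EReal)) atTop

/-- Mean-payoff of a play (limsup variant). -/
def MPsupP (G : Game S) (π : ℕ → S) : EReal :=
  limsup (fun n : ℕ => (((ELp G π n : ℝ) / n : ℝ) : EReal)) atTop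

/-- Total-payoff of a play (limsup variant). -/
def TPsupP (G : Game S) (π : ℕ → S) : EReal :=
  limsup (fun n : ℕ => ((ELp G π n : ℝ) : EReal)) atTop

/-- The history (finite prefix) `π 0, …, π n` of a play, as a list. -/
def hist (π : ℕ → S) (n : ℕ) : List S := List.ofFn (fun i : Fin (n + 1) => π i)

/-- A (deterministic) strategy for player 1: on every nonempty finite path of `G` ending in a
player-1 state, it prescribes an `E`-successor of the last state. -/
def IsStrat1 (G : Game S) (σ : List S → S) : Prop :=
  ∀ (ρ : List S) (h : ρ ≠ []), List.Chain' G.E ρ → G.p1 (ρ.getLast h) →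
    G.E (ρ.getLast h) (σ ρ)

/-- A strategy for player 2 (who owns the states where `p1` fails). -/
def IsStrat2 (G : Game S) (σ : List S → S) : Prop :=
  ∀ (ρ : List S) (h : ρ ≠ []), List.Chain' G.E ρ → ¬ G.p1 (ρ.getLast h) →
    G.E (ρ.getLast h) (σ ρ)

/-- A strategy is memoryless if its choice only depends on the last state of the history. -/
def Memoryless (σ : List S → S) : Prop :=
  ∀ (ρ ρ' : List S) (h : ρ ≠ []) (h' : ρ' ≠ []),
    ρ.getLast h = ρ'.getLast h' → σ ρ = σ ρ'

/-- The play `π` is consistent with the player-1 strategy `σ`. -/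
def Consistent1 (G : Game S) (σ : List S → S) (π : ℕ → S) : Prop :=
  ∀ n, G.p1 (π n) → π (n + 1) = σ (hist π n)

/-- The play `π` is consistent with the player-2 strategy `σ`. -/
def Consistent2 (G : Game S) (σ : List S → S) (π : ℕ → S) : Prop :=
  ∀ n, ¬ G.p1 (π n) → π (n + 1) = σ (hist π n)

/-- `σ` is a winning strategy for player 1 from `s₀` for the objective `Obj`:
every consistent play from `s₀` belongs to `Obj`. -/
def Winning1 (G : Game S) (s₀ : S) (σ : List S → S) (Obj : (ℕ → S) → Prop) : Prop :=
  IsStrat1 G σ ∧ ∀ π, IsPlay G s₀ π → Consistent1 G σ π → Obj π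

/-- `σ` is a winning strategy for player 2 from `s₀` against the objective `Obj`:
every consistent play from `s₀` lies outside `Obj`. -/
def Winning2 (G : Game S) (s₀ : S) (σ : List S → S) (Obj : (ℕ → S) → Prop) : Prop :=
  IsStrat2 G σ ∧ ∀ π, IsPlay G s₀ π → Consistent2 G σ π → ¬ Obj π

/-- Average-energy objective: the average-energy of the play is at most `t`. -/
def AvgEnergyLevel (G : Game S) (t : ℚ) : (ℕ → S) → Prop :=
  fun π => AEsupP G π ≤ ((t : ℝ) : EReal)

/-- Mean-payoff objective: the mean-payoff of the play is at most `t`. -/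
def MeanPayOff (G : Game S) (t : ℚ) : (ℕ → S) → Prop :=
  fun π => MPsupP G π ≤ ((t : ℝ) : EReal)

/-- Total-payoff objective: the total-payoff of the play is at most `t`. -/
def TotalPayOff (G : Game S) (t : ℤ) : (ℕ → S) → Prop :=
  fun π => TPsupP G π ≤ ((t : ℝ) : EReal)

/-- Lower-bounded energy objective with initial credit `c₀`. -/
def LowerObj (G : Game S) (c₀ : ℕ) : (ℕ → S) → Prop :=
  fun π => ∀ n, 0 ≤ (c₀ : ℤ) + ELp G π n

/-- Lower- and upper-bounded energy objective with upper bound `U` and initial credit `c₀`. -/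
def LUObj (G : Game S) (U c₀ : ℕ) : (ℕ → S) → Prop :=
  fun π => ∀ n, 0 ≤ (c₀ : ℤ) + ELp G π n ∧ (c₀ : ℤ) + ELp G π n ≤ (U : ℤ)

/-!
Scale the weights to `ŵ = (|S| + 1) * w + 1`. Energy games are determined with positional
strategies: value iteration of the minimal-credit operator yields an integer potential `f` and a
region `D` such that, inside `D`, player 1 can keep `f` from increasing by more than the scaled
weight of each move, while outside `D` player 2 can keep `f` increasing by at least that much.

If `s₀ ∈ D`, every cycle of length at most `|S|` on a play consistent with player 1's strategy has
`ŵ`-weight `≥ 0`, hence `w`-weight `> -1`, i.e. `≥ 0`; cutting such cycles out of a play bounds its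
energy below by `-(|S| - 1) * W`, so player 1 wins all four objectives. If `s₀ ∉ D`, the scaled
energy stays bounded above, so the energy of `G` decreases at least linearly against any strategy
of player 1, and none of the four objectives can be won.
-/

open Finset

namespace Game

def withWeights (G : Game S) (w : S → S → ℤ) : Game S := ⟨G.p1, G.E, w, G.succ⟩

end Game

section Energy

variable {G : Game S} {π : ℕ → S}

@[simp]
lemma ELp_zero : ELp G π 0 = 0 := sum_range_zero _

lemma ELp_succ (n : ℕ) : ELp G π (n + 1) = ELp G π n + G.w (π n) (π (n + 1)) :=
  sum_range_succ _ _

lemma ELp_withWeights_neg (n : ℕ) :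
    ELp (G.withWeights fun s t => -G.w s t) π n = -ELp G π n :=
  sum_neg_distrib _

lemma ELp_withWeights_affine (a b : ℤ) (n : ℕ) :
    ELp (G.withWeights fun s t => a * G.w s t + b) π n = a * ELp G π n + b * n := by
  simp [ELp, Game.withWeights, sum_add_distrib, mul_sum, mul_comm]

lemma neg_mul_le_ELp {W : ℤ} (hW : ∀ n, |G.w (π n) (π (n + 1))| ≤ W) (n : ℕ) :
    -(n * W) ≤ ELp G π n := by
  induction n with
  | zero => simp
  | succ n ih =>
    rw [ELp_succ]
    push_cast
    linarith [neg_abs_le (G.w (π n) (π (n + 1))), hW n]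

lemma antitone_sub_ELp {f : S → ℤ} (hf : ∀ n, f (π (n + 1)) ≤ f (π n) + G.w (π n) (π (n + 1))) :
    Antitone fun n => f (π n) - ELp G π n :=
  antitone_nat_of_succ_le fun n => by rw [ELp_succ]; linarith [hf n]

lemma monotone_sub_ELp {f : S → ℤ} (hf : ∀ n, f (π n) + G.w (π n) (π (n + 1)) ≤ f (π (n + 1))) :
    Monotone fun n => f (π n) - ELp G π n :=
  monotone_nat_of_le_succ fun n => by rw [ELp_succ]; linarith [hf n]

end Energy

section CycleCutting

/-- `π` with the positions `i, …, i + d - 1` removed. -/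
def dropSegment (π : ℕ → S) (i d : ℕ) : ℕ → S := fun m => if m < i then π m else π (m + d)

variable {π : ℕ → S} {i d : ℕ}

lemma dropSegment_add (m : ℕ) : dropSegment π i d (i + m) = π (i + d + m) := by
  simp only [dropSegment, if_neg (Nat.not_lt.2 (Nat.le_add_right i m))]
  ring_nf

lemma dropSegment_of_le (hcyc : π i = π (i + d)) {m : ℕ} (hm : m ≤ i) :
    dropSegment π i d m = π m := by
  rcases hm.lt_or_eq with hm | rfl
  · exact if_pos hm
  · simpa using (dropSegment_add (π := π) (d := d) 0).trans hcyc.symm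

lemma exists_dropSegment_step (hcyc : π i = π (i + d)) (m : ℕ) :
    ∃ k, dropSegment π i d m = π k ∧ dropSegment π i d (m + 1) = π (k + 1) := by
  rcases lt_or_ge m i with hm | hm
  · exact ⟨m, dropSegment_of_le hcyc hm.le, dropSegment_of_le hcyc hm⟩
  · obtain ⟨m, rfl⟩ := Nat.exists_eq_add_of_le hm
    exact ⟨i + d + m, dropSegment_add m, dropSegment_add (m + 1)⟩

lemma ELp_dropSegment (G : Game S) (hcyc : π i = π (i + d)) (m : ℕ) :
    ELp G (dropSegment π i d) (i + m) = ELp G π i + (ELp G π (i + d + m) - ELp G π (i + d)) := by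
  induction m with
  | zero =>
    simp only [add_zero, sub_self]
    refine sum_congr rfl fun r hr => ?_
    have hr : r < i := mem_range.1 hr
    rw [dropSegment_of_le hcyc hr.le, dropSegment_of_le hcyc hr]
  | succ m ih =>
    rw [← add_assoc, ELp_succ, ih, dropSegment_add, add_assoc i m 1, dropSegment_add,
      ← add_assoc, ELp_succ]
    ring

variable [Fintype S]

lemma exists_lt_le_card_map_eq (π : ℕ → S) :
    ∃ i j, i < j ∧ j ≤ Fintype.card S ∧ π i = π j := by
  obtain ⟨a, b, hab, h⟩ :=
    Fintype.exists_ne_map_eq_of_card_lt (fun k : Fin (Fintype.card S + 1) => π k) (by simp)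
  rcases Fin.lt_or_lt_of_ne hab with hlt | hlt
  · exact ⟨a, b, hlt, Nat.lt_succ_iff.1 b.2, h⟩
  · exact ⟨b, a, hlt, Nat.lt_succ_iff.1 a.2, h.symm⟩

variable {G : Game S} {f : S → ℤ}

lemma ELp_le_of_scaled_potential
    (hf : ∀ n, f (π (n + 1)) ≤ f (π n) + ((Fintype.card S + 1) * G.w (π n) (π (n + 1)) + 1))
    {j : ℕ} (hij : i ≤ j) (hlen : j ≤ i + Fintype.card S) (hcyc : π i = π j) :
    ELp G π i ≤ ELp G π j := by
  have h := antitone_sub_ELp (G := G.withWeights fun s t => (Fintype.card S + 1) * G.w s t + 1)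
    hf hij
  simp only [ELp_withWeights_affine, hcyc] at h
  have hlen' : (j : ℤ) ≤ i + Fintype.card S := by exact_mod_cast hlen
  by_contra! hlt
  have : ((Fintype.card S : ℤ) + 1) * (ELp G π j - ELp G π i) ≤ (Fintype.card S + 1) * (-1) :=
    mul_le_mul_of_nonneg_left (by omega) (by positivity)
  linarith

theorem neg_mul_le_ELp_of_scaled_potential {W : ℤ}
    (hstep : ∀ n, |G.w (π n) (π (n + 1))| ≤ W ∧
      f (π (n + 1)) ≤ f (π n) + ((Fintype.card S + 1) * G.w (π n) (π (n + 1)) + 1)) (n : ℕ) :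
    -(((Fintype.card S : ℤ) - 1) * W) ≤ ELp G π n := by
  induction n using Nat.strong_induction_on generalizing π with
  | _ n ih =>
  rcases lt_or_ge n (Fintype.card S) with hn | hn
  · have hW : 0 ≤ W := (abs_nonneg _).trans (hstep 0).1
    have hn' : (n : ℤ) ≤ Fintype.card S - 1 := by omega
    nlinarith [neg_mul_le_ELp (fun m => (hstep m).1) n]
  · obtain ⟨i, j, hij, hjN, hcyc⟩ := exists_lt_le_card_map_eq π
    obtain ⟨d, rfl⟩ := Nat.exists_eq_add_of_le hij.le
    have hcut := ih (n - d) (by omega) (π := dropSegment π i d) fun m => by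
      obtain ⟨k, hk, hk'⟩ := exists_dropSegment_step hcyc m
      rw [hk, hk']
      exact hstep k
    have hEL := ELp_dropSegment G hcyc (n - d - i)
    rw [show i + (n - d - i) = n - d by omega, show i + d + (n - d - i) = n by omega] at hEL
    have hcyc_nonneg :=
      ELp_le_of_scaled_potential (fun m => (hstep m).2) (Nat.le_add_right i d) (by omega) hcyc
    linarith

end CycleCutting

def IsSafeRegion (G : Game S) (mine : S → Prop) (good : S → S → Prop) (D : Set S) : Prop :=
  ∀ s ∈ D, (mine s → ∃ t ∈ D, G.E s t ∧ good s t) ∧ (¬ mine s → ∀ t, G.E s t → t ∈ D ∧ good s t)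

theorem IsSafeRegion.exists_positional {G : Game S} {mine : S → Prop} {good : S → S → Prop}
    {D : Set S} (h : IsSafeRegion G mine good D) :
    ∃ τ : S → S, (∀ s, G.E s (τ s)) ∧ ∀ π : ℕ → S, π 0 ∈ D → (∀ n, G.E (π n) (π (n + 1))) →
      (∀ n, mine (π n) → π (n + 1) = τ (π n)) → ∀ n, π n ∈ D ∧ good (π n) (π (n + 1)) := by
  have hchoice : ∀ s, ∃ t, G.E s t ∧ (s ∈ D → mine s → t ∈ D ∧ good s t) := by
    intro s
    by_cases hs : s ∈ D ∧ mine s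
    · obtain ⟨t, htD, ht, hgood⟩ := (h s hs.1).1 hs.2
      exact ⟨t, ht, fun _ _ => ⟨htD, hgood⟩⟩
    · obtain ⟨t, ht⟩ := G.succ s
      exact ⟨t, ht, fun h₁ h₂ => absurd ⟨h₁, h₂⟩ hs⟩
  choose τ hτE hτ using hchoice
  refine ⟨τ, hτE, fun π h₀ hE hcons => ?_⟩
  have hstep : ∀ n, π n ∈ D → π (n + 1) ∈ D ∧ good (π n) (π (n + 1)) := by
    intro n hn
    by_cases hm : mine (π n)
    · rw [hcons n hm]
      exact hτ _ hn hm
    · exact (h _ hn).2 hm _ (hE n)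
  have hD : ∀ n, π n ∈ D := fun n => Nat.rec h₀ (fun n ih => (hstep n ih).1) n
  exact fun n => ⟨hD n, (hstep n (hD n)).2⟩

namespace Game

variable [Fintype S] (G : Game S)

open Classical in
def succs (s : S) : Finset S := univ.filter (G.E s)

variable {G}

lemma mem_succs {s t : S} : t ∈ G.succs s ↔ G.E s t := by
  simp [succs]

variable (G)

lemma succs_nonempty (s : S) : (G.succs s).Nonempty :=
  let ⟨t, ht⟩ := G.succ s
  ⟨t, mem_succs.2 ht⟩

open Classical in
/-- If `f t` is the credit needed from each state `t` onwards, `creditStep f s` is the credit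
needed at `s`: moving along `s → t` requires `max 0 (f t - w s t)`, player 1 picks the cheapest
move and player 2 the most expensive one. -/
def creditStep (f : S → ℤ) (s : S) : ℤ :=
  if G.p1 s then (G.succs s).inf' (G.succs_nonempty s) fun t => max 0 (f t - G.w s t)
  else (G.succs s).sup' (G.succs_nonempty s) fun t => max 0 (f t - G.w s t)

variable {G}

lemma creditStep_le {f : S → ℤ} {s t : S} (hp : G.p1 s) (ht : G.E s t) :
    G.creditStep f s ≤ max 0 (f t - G.w s t) := by
  rw [creditStep, if_pos hp]
  exact inf'_le _ (mem_succs.2 ht)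

lemma le_creditStep {f : S → ℤ} {s t : S} (hp : ¬ G.p1 s) (ht : G.E s t) :
    max 0 (f t - G.w s t) ≤ G.creditStep f s := by
  rw [creditStep, if_neg hp]
  exact le_sup' (fun t => max 0 (f t - G.w s t)) (mem_succs.2 ht)

lemma exists_creditStep_eq (f : S → ℤ) (s : S) :
    ∃ t, G.E s t ∧ G.creditStep f s = max 0 (f t - G.w s t) := by
  unfold creditStep
  split
  · obtain ⟨t, ht, h⟩ := exists_mem_eq_inf' (G.succs_nonempty s) fun t => max 0 (f t - G.w s t)
    exact ⟨t, mem_succs.1 ht, h⟩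
  · obtain ⟨t, ht, h⟩ := exists_mem_eq_sup' (G.succs_nonempty s) fun t => max 0 (f t - G.w s t)
    exact ⟨t, mem_succs.1 ht, h⟩

lemma creditStep_nonneg (f : S → ℤ) (s : S) : 0 ≤ G.creditStep f s := by
  obtain ⟨t, -, h⟩ := G.exists_creditStep_eq f s
  exact h ▸ le_max_left _ _

variable (G)

lemma monotone_creditStep : Monotone G.creditStep := by
  intro f f' hf s
  by_cases hp : G.p1 s
  · obtain ⟨t, ht, h⟩ := G.exists_creditStep_eq f' s
    calc G.creditStep f s ≤ max 0 (f t - G.w s t) := creditStep_le hp ht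
      _ ≤ max 0 (f' t - G.w s t) := by gcongr; exact hf t
      _ = G.creditStep f' s := h.symm
  · obtain ⟨t, ht, h⟩ := G.exists_creditStep_eq f s
    calc G.creditStep f s = max 0 (f t - G.w s t) := h
      _ ≤ max 0 (f' t - G.w s t) := by gcongr; exact hf t
      _ ≤ G.creditStep f' s := le_creditStep hp ht

/-- `creditIter k s` is the least initial credit with which player 1 keeps the energy
nonnegative during the first `k` moves from `s`. -/
def creditIter (k : ℕ) : S → ℤ := G.creditStep^[k] 0

lemma creditIter_succ (k : ℕ) : G.creditIter (k + 1) = G.creditStep (G.creditIter k) :=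
  Function.iterate_succ_apply' _ _ _

lemma monotone_creditIter : Monotone G.creditIter :=
  G.monotone_creditStep.monotone_iterate_of_le_map fun s => G.creditStep_nonneg 0 s

end Game

lemma Int.eventually_eq_csSup_of_monotone {u : ℕ → ℤ} (hu : Monotone u)
    (hb : BddAbove (Set.range u)) : ∀ᶠ k in Filter.atTop, u k = sSup (Set.range u) := by
  obtain ⟨K, hK⟩ := Int.csSup_mem (Set.range_nonempty u) hb
  exact Filter.eventually_atTop.2 ⟨K, fun k hk =>
    le_antisymm (le_csSup hb ⟨k, rfl⟩) (hK ▸ hu hk)⟩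

namespace Game

variable [Fintype S] (G : Game S)

/-- Along value iteration, the credits of the states that stay bounded stabilise below some `C`,
while all others eventually exceed `C + Wb`. -/
theorem exists_creditIter_gap {Wb : ℤ} (hWb : 0 ≤ Wb) :
    ∃ K C, 0 ≤ C ∧ (∀ s, G.creditIter K s ≤ C ∨ C + Wb < G.creditIter K s) ∧
      ∀ s, G.creditIter K s ≤ C → G.creditIter (K + 1) s = G.creditIter K s := by
  set bdd : S → Prop := fun s => BddAbove (Set.range fun k => G.creditIter k s)
  have hmono : ∀ s, Monotone fun k => G.creditIter k s := fun s _ _ hkl =>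
    G.monotone_creditIter hkl s
  obtain ⟨C, hC0, hC⟩ : ∃ C, 0 ≤ C ∧ ∀ s, bdd s → ∀ k, G.creditIter k s ≤ C := by
    obtain ⟨C, hC⟩ := Finite.exists_le fun s => sSup (Set.range fun k => G.creditIter k s)
    exact ⟨max C 0, le_max_right _ _, fun s hs k =>
      (le_csSup hs ⟨k, rfl⟩).trans ((hC s).trans (le_max_left _ _))⟩
  have hev : ∀ s, ∀ᶠ k in Filter.atTop, (bdd s → G.creditIter (k + 1) s = G.creditIter k s) ∧
      (¬ bdd s → C + Wb < G.creditIter k s) := by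
    intro s
    by_cases hs : bdd s
    · have hlim := Int.eventually_eq_csSup_of_monotone (hmono s) hs
      filter_upwards [hlim, (Filter.tendsto_add_atTop_nat 1).eventually hlim] with k hk hk'
      exact ⟨fun _ => hk'.trans hk.symm, fun h => absurd hs h⟩
    · have hunb : ∀ b, ∃ k, b ≤ G.creditIter k s := fun b =>
        let ⟨_, ⟨k, hk⟩, hb⟩ := not_bddAbove_iff.1 hs b
        ⟨k, (hb.trans_eq hk.symm).le⟩
      filter_upwards [((hmono s).tendsto_atTop_atTop hunb).eventually_gt_atTop (C + Wb)] with k hk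
      exact ⟨fun h => absurd h hs, fun _ => hk⟩
  obtain ⟨K, hK⟩ := (Filter.eventually_all.2 hev).exists
  refine ⟨K, C, hC0, fun s => ?_, fun s hs => (hK s).1 ?_⟩
  · by_cases h : bdd s
    · exact Or.inl (hC s h K)
    · exact Or.inr ((hK s).2 h)
  · by_contra h
    linarith [(hK s).2 h]

variable {G}

theorem isSafeRegion_le_of_creditStep_eq {f : S → ℤ} {C Wb : ℤ} (hw : ∀ s t, |G.w s t| ≤ Wb)
    (hgap : ∀ s, f s ≤ C ∨ C + Wb < f s) (hfix : ∀ s, f s ≤ C → G.creditStep f s = f s) :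
    IsSafeRegion G G.p1 (fun s t => f t ≤ f s + G.w s t) {s | f s ≤ C} := by
  have hstay : ∀ s t, f s ≤ C → f t ≤ f s + G.w s t → f t ≤ C := fun s t hs ht =>
    (hgap t).resolve_right fun h => by linarith [le_abs_self (G.w s t), hw s t]
  intro s hs
  constructor
  · intro _
    obtain ⟨t, ht, heq⟩ := G.exists_creditStep_eq f s
    have hle : f t ≤ f s + G.w s t := by
      linarith [hfix s hs, le_max_right 0 (f t - G.w s t)]
    exact ⟨t, hstay s t hs hle, ht, hle⟩
  · intro hp t ht
    have hle : f t ≤ f s + G.w s t := by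
      linarith [hfix s hs, le_creditStep (f := f) hp ht, le_max_right 0 (f t - G.w s t)]
    exact ⟨hstay s t hs hle, hle⟩

theorem isSafeRegion_compl_of_le_creditStep {f : S → ℤ} {C Wb : ℤ}
    (hw : ∀ s t, |G.w s t| ≤ Wb) (hC : 0 ≤ C) (hgap : ∀ s, f s ≤ C ∨ C + Wb < f s)
    (hle : ∀ s, f s ≤ G.creditStep f s) :
    IsSafeRegion G (fun s => ¬ G.p1 s) (fun s t => f s + G.w s t ≤ f t) {s | f s ≤ C}ᶜ := by
  have hstep : ∀ s t, ¬ f s ≤ C → f s ≤ max 0 (f t - G.w s t) →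
      ¬ f t ≤ C ∧ f s + G.w s t ≤ f t := by
    intro s t hs hmax
    have hs' := (hgap s).resolve_left hs
    have hw' := abs_le.1 (hw s t)
    have hle : f s + G.w s t ≤ f t := by
      rcases max_cases 0 (f t - G.w s t) with ⟨h, -⟩ | ⟨h, -⟩ <;> linarith
    exact ⟨by linarith, hle⟩
  intro s hs
  constructor
  · intro _
    obtain ⟨t, ht, heq⟩ := G.exists_creditStep_eq f s
    obtain ⟨htD, hgood⟩ := hstep s t hs (heq ▸ hle s)
    exact ⟨t, htD, ht, hgood⟩
  · intro hp t ht
    exact hstep s t hs ((hle s).trans (creditStep_le (not_not.1 hp) ht))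

variable (G)

theorem exists_potential_safeRegions : ∃ (f : S → ℤ) (D : Set S),
    IsSafeRegion G G.p1 (fun s t => f t ≤ f s + G.w s t) D ∧
    IsSafeRegion G (fun s => ¬ G.p1 s) (fun s t => f s + G.w s t ≤ f t) Dᶜ := by
  obtain ⟨Wb, hWb, hw⟩ : ∃ Wb, 0 ≤ Wb ∧ ∀ s t, |G.w s t| ≤ Wb := by
    obtain ⟨Wb, hWb⟩ := Finite.exists_le fun p : S × S => |G.w p.1 p.2|
    exact ⟨max Wb 0, le_max_right _ _, fun s t => (hWb (s, t)).trans (le_max_left _ _)⟩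
  obtain ⟨K, C, hC, hgap, hfix⟩ := G.exists_creditIter_gap hWb
  refine ⟨G.creditIter K, _, isSafeRegion_le_of_creditStep_eq hw hgap fun s hs => ?_,
    isSafeRegion_compl_of_le_creditStep hw hC hgap fun s => ?_⟩
  · rw [← creditIter_succ]
    exact hfix s hs
  · rw [← creditIter_succ]
    exact G.monotone_creditIter K.le_succ s

end Game

section Strategies

variable {G : Game S}

lemma hist_succ (π : ℕ → S) (n : ℕ) : hist π (n + 1) = hist π n ++ [π (n + 1)] := by
  rw [hist, hist, List.ofFn_succ', List.concat_eq_append]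
  rfl

lemma hist_ne_nil (π : ℕ → S) (n : ℕ) : hist π n ≠ [] := by
  simp [hist]

lemma getLast_hist (π : ℕ → S) (n : ℕ) : (hist π n).getLast (hist_ne_nil π n) = π n :=
  List.getLast_ofFn _

lemma getLastD_hist (π : ℕ → S) (n : ℕ) (s₀ : S) : (hist π n).getLastD s₀ = π n := by
  rw [List.getLastD_eq_getLast?, List.getLast?_eq_some_getLast (hist_ne_nil π n), Option.getD_some,
    getLast_hist]

lemma isChain_hist {π : ℕ → S} {n : ℕ} (h : ∀ m < n, G.E (π m) (π (m + 1))) :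
    List.IsChain G.E (hist π n) :=
  List.isChain_ofFn.2 fun m hm => h m (by omega)

/-- `s₀` is only a default for the empty history, which never occurs in a play. -/
def positional (τ : S → S) (s₀ : S) : List S → S := fun ρ => τ (ρ.getLastD s₀)

lemma positional_eq {τ : S → S} {s₀ : S} {ρ : List S} (h : ρ ≠ []) :
    positional τ s₀ ρ = τ (ρ.getLast h) := by
  rw [positional, List.getLastD_eq_getLast?, List.getLast?_eq_some_getLast h, Option.getD_some]

lemma isStrat1_positional {τ : S → S} (hτ : ∀ s, G.E s (τ s)) (s₀ : S) :
    IsStrat1 G (positional τ s₀) :=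
  fun _ h _ _ => positional_eq h ▸ hτ _

lemma isStrat2_positional {τ : S → S} (hτ : ∀ s, G.E s (τ s)) (s₀ : S) :
    IsStrat2 G (positional τ s₀) :=
  fun _ h _ _ => positional_eq h ▸ hτ _

lemma consistent1_positional_iff {τ : S → S} {s₀ : S} {π : ℕ → S} :
    Consistent1 G (positional τ s₀) π ↔ ∀ n, G.p1 (π n) → π (n + 1) = τ (π n) := by
  simp only [Consistent1, positional, getLastD_hist]

lemma consistent2_positional_iff {τ : S → S} {s₀ : S} {π : ℕ → S} :
    Consistent2 G (positional τ s₀) π ↔ ∀ n, ¬ G.p1 (π n) → π (n + 1) = τ (π n) := by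
  simp only [Consistent2, positional, getLastD_hist]

variable (G) (σ τ : List S → S) (s₀ : S)

open Classical in
def outcomeHist : ℕ → List S
  | 0 => [s₀]
  | n + 1 =>
    outcomeHist n ++ [if G.p1 ((outcomeHist n).getLastD s₀) then σ (outcomeHist n)
      else τ (outcomeHist n)]

def outcome (n : ℕ) : S := (outcomeHist G σ τ s₀ n).getLastD s₀

lemma outcomeHist_eq_hist (n : ℕ) : outcomeHist G σ τ s₀ n = hist (outcome G σ τ s₀) n := by
  induction n with
  | zero => rfl
  | succ n ih =>
    rw [hist_succ, ← ih, outcome, outcomeHist, List.getLastD_concat]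

open Classical in
lemma outcome_succ (n : ℕ) :
    outcome G σ τ s₀ (n + 1) = if G.p1 (outcome G σ τ s₀ n) then σ (hist (outcome G σ τ s₀) n)
      else τ (hist (outcome G σ τ s₀) n) := by
  rw [outcome, outcomeHist, List.getLastD_concat, outcomeHist_eq_hist, getLastD_hist]

variable {G σ τ}

theorem exists_play_consistent (hσ : IsStrat1 G σ) (hτ : IsStrat2 G τ) :
    ∃ π, IsPlay G s₀ π ∧ Consistent1 G σ π ∧ Consistent2 G τ π := by
  have hedge : ∀ n, G.E (outcome G σ τ s₀ n) (outcome G σ τ s₀ (n + 1)) := by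
    intro n
    induction n using Nat.strong_induction_on with
    | _ n ih =>
    have hchain := isChain_hist ih
    have hlast := getLast_hist (outcome G σ τ s₀) n
    rw [outcome_succ]
    split_ifs with hp
    · exact hlast ▸ hσ _ _ hchain (hlast ▸ hp)
    · exact hlast ▸ hτ _ _ hchain (hlast ▸ hp)
  refine ⟨outcome G σ τ s₀, ⟨rfl, hedge⟩, fun n hp => ?_, fun n hp => ?_⟩
  · rw [outcome_succ, if_pos hp]
  · rw [outcome_succ, if_neg hp]

end Strategies

section Payoffs

variable {G : Game S} {π : ℕ → S}

lemma meanPayOff_of_le {K : ℤ} (h : ∀ n, ELp G π n ≤ K) : MeanPayOff G 0 π := by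
  have hle : ∀ᶠ n : ℕ in Filter.atTop,
      (((ELp G π n : ℝ) / n : ℝ) : EReal) ≤ (((K : ℝ) / n : ℝ) : EReal) := by
    filter_upwards [Filter.eventually_ge_atTop 1] with n hn
    exact EReal.coe_le_coe_iff.2 (by gcongr; exact_mod_cast h n)
  have hlim : Filter.Tendsto (fun n : ℕ => (((K : ℝ) / n : ℝ) : EReal)) Filter.atTop
      (nhds ((0 : ℝ) : EReal)) :=
    EReal.tendsto_coe.2 (tendsto_const_div_atTop_nhds_zero_nat _)
  simpa [MeanPayOff, MPsupP] using (Filter.limsup_le_limsup hle).trans hlim.limsup_eq.le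

lemma totalPayOff_of_le {t : ℤ} (h : ∀ n, ELp G π n ≤ t) : TotalPayOff G t π :=
  Filter.limsup_le_of_le (by isBoundedDefault) (Filter.Eventually.of_forall fun n =>
    EReal.coe_le_coe_iff.2 (by exact_mod_cast h n))

variable {c M : ℤ}

lemma tendsto_ELp_of_linear (hc : 0 < c) (h : ∀ n : ℕ, (n : ℤ) ≤ M + c * ELp G π n) :
    Filter.Tendsto (ELp G π) Filter.atTop Filter.atTop := by
  refine Filter.tendsto_atTop.2 fun b => ?_
  filter_upwards [Filter.eventually_ge_atTop (M + c * b).toNat] with n hn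
  have hn' : M + c * b ≤ n := (Int.self_le_toNat _).trans (by exact_mod_cast hn)
  exact le_of_mul_le_mul_left (by linarith [h n]) hc

lemma not_totalPayOff_of_linear (hc : 0 < c) (h : ∀ n : ℕ, (n : ℤ) ≤ M + c * ELp G π n) (t : ℤ) :
    ¬ TotalPayOff G t π := by
  intro ht
  have hfreq : ∃ᶠ n in Filter.atTop, (((t + 1 : ℤ) : ℝ) : EReal) ≤ ((ELp G π n : ℝ) : EReal) :=
    ((tendsto_ELp_of_linear hc h).eventually_ge_atTop (t + 1)).frequently.mono fun n hn =>
      EReal.coe_le_coe_iff.2 (by exact_mod_cast hn)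
  have := EReal.coe_le_coe_iff.1 ((Filter.le_limsup_of_frequently_le hfreq).trans ht)
  push_cast at this
  linarith

lemma not_meanPayOff_of_linear (hc : 0 < c) (h : ∀ n : ℕ, (n : ℤ) ≤ M + c * ELp G π n) :
    ¬ MeanPayOff G 0 π := by
  intro hmp
  have hc' : (0 : ℝ) < 2 * c := by positivity
  have hfreq : ∃ᶠ n : ℕ in Filter.atTop,
      (((1 / (2 * c) : ℝ)) : EReal) ≤ (((ELp G π n : ℝ) / n : ℝ) : EReal) := by
    refine (Filter.eventually_ge_atTop (max 1 (2 * M).toNat)).frequently.mono fun n hn => ?_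
    have hn1 : (0 : ℝ) < n := by exact_mod_cast (le_max_left _ _).trans hn
    have hnM : 2 * M ≤ n :=
      (Int.self_le_toNat _).trans (by exact_mod_cast (le_max_right _ _).trans hn)
    have hint : (n : ℤ) ≤ ELp G π n * (2 * c) := by linarith [h n]
    refine EReal.coe_le_coe_iff.2 ((div_le_div_iff₀ hc' hn1).2 ?_)
    rw [one_mul]
    exact_mod_cast hint
  have hpos : ((0 : ℚ) : ℝ) < 1 / (2 * c) := by
    rw [Rat.cast_zero]
    positivity
  exact hpos.not_ge (EReal.coe_le_coe_iff.1 ((Filter.le_limsup_of_frequently_le hfreq).trans hmp))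

end Payoffs

theorem exists_lowerBound_or_linearLoss [Fintype S] (G : Game S) (s₀ : S) {W : ℤ}
    (hW : ∀ s t, G.E s t → |G.w s t| ≤ W) :
    (∃ σ, Winning1 G s₀ σ fun π => ∀ n, -(((Fintype.card S : ℤ) - 1) * W) ≤ ELp G π n) ∨
    ∃ M, ∀ σ, IsStrat1 G σ → ∃ π, IsPlay G s₀ π ∧ Consistent1 G σ π ∧
      ∀ n : ℕ, (n : ℤ) ≤ M + (Fintype.card S + 1) * -ELp G π n := by
  set Ĝ := G.withWeights fun s t => (Fintype.card S + 1) * G.w s t + 1 with hĜ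
  obtain ⟨f, D, hwin, hlose⟩ := Ĝ.exists_potential_safeRegions
  by_cases h₀ : s₀ ∈ D
  · obtain ⟨τ, hτE, hτ⟩ := hwin.exists_positional
    refine .inl ⟨positional τ s₀, isStrat1_positional hτE s₀, fun π hπ hcons => ?_⟩
    have hsafe := hτ π (hπ.1 ▸ h₀) hπ.2 (consistent1_positional_iff.1 hcons)
    exact neg_mul_le_ELp_of_scaled_potential fun n => ⟨hW _ _ (hπ.2 n), (hsafe n).2⟩
  · obtain ⟨τ, hτE, hτ⟩ := hlose.exists_positional
    obtain ⟨B, hB⟩ := Finite.exists_le f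
    refine .inr ⟨B - f s₀, fun σ hσ => ?_⟩
    obtain ⟨π, hπ, hcons, hcons'⟩ := exists_play_consistent s₀ hσ (isStrat2_positional hτE s₀)
    refine ⟨π, hπ, hcons, fun n => ?_⟩
    have hsafe := hτ π (hπ.1 ▸ h₀) hπ.2 (consistent2_positional_iff.1 hcons')
    have hmono := monotone_sub_ELp (G := Ĝ) (fun n => (hsafe n).2) (Nat.zero_le n)
    simp only [hĜ, ELp_withWeights_affine, ELp_zero, hπ.1] at hmono
    linarith [hB (π n)]

/-- Equivalence of lower-bounded energy (in `G`) with mean-payoff and total-payoff objectives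
(in the sign-reversed game `G'`), with `W` the largest absolute weight of `G`. -/
theorem energy_MP_TP_equivalences {S : Type} [Fintype S] (G : Game S) (s₀ : S) (W : ℕ)
    (hW : ∀ s s', G.E s s' → (G.w s s').natAbs ≤ W) :
    letI G' : Game S := ⟨G.p1, G.E, fun s t => -(G.w s t), G.succ⟩
    ((∃ c₀ : ℕ, ∃ σ : List S → S, Winning1 G s₀ σ (LowerObj G c₀)) ↔
      (∃ σ : List S → S, Winning1 G' s₀ σ (MeanPayOff G' 0))) ∧
    ((∃ σ : List S → S, Winning1 G' s₀ σ (MeanPayOff G' 0)) ↔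
      (∃ σ : List S → S,
        Winning1 G' s₀ σ (TotalPayOff G' (2 * ((Fintype.card S : ℤ) - 1) * (W : ℤ))))) ∧
    ((∃ σ : List S → S,
        Winning1 G' s₀ σ (TotalPayOff G' (2 * ((Fintype.card S : ℤ) - 1) * (W : ℤ)))) ↔
      (∃ t : ℤ, ∃ σ : List S → S, Winning1 G' s₀ σ (TotalPayOff G' t))) := by
  set G' := G.withWeights fun s t => -G.w s t
  have hEL : ∀ π n, ELp G' π n = -ELp G π n := fun _ => ELp_withWeights_neg
  have hAB : (∃ c₀ : ℕ, ∃ σ, Winning1 G s₀ σ (LowerObj G c₀)) →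
      ∃ σ, Winning1 G' s₀ σ (MeanPayOff G' 0) := fun ⟨c₀, σ, hσ, hwin⟩ =>
    ⟨σ, hσ, fun π hπ hcons => meanPayOff_of_le fun n => by linarith [hEL π n, hwin π hπ hcons n]⟩
  have hCD : ∀ {t : ℤ}, (∃ σ, Winning1 G' s₀ σ (TotalPayOff G' t)) →
      ∃ t : ℤ, ∃ σ, Winning1 G' s₀ σ (TotalPayOff G' t) := fun h => ⟨_, h⟩
  have hW' : ∀ s t, G.E s t → |G.w s t| ≤ W := fun s t h =>
    Int.abs_eq_natAbs _ ▸ Int.ofNat_le.2 (hW s t h)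
  rcases exists_lowerBound_or_linearLoss G s₀ hW' with ⟨σ, hσ, hlow⟩ | ⟨M, hloss⟩
  · have hN : (1 : ℤ) ≤ Fintype.card S := by exact_mod_cast Fintype.card_pos_iff.2 ⟨s₀⟩
    have hA : ∃ c₀ : ℕ, ∃ σ, Winning1 G s₀ σ (LowerObj G c₀) :=
      ⟨(((Fintype.card S : ℤ) - 1) * W).toNat, σ, hσ, fun π hπ hcons n => by
        linarith [Int.self_le_toNat (((Fintype.card S : ℤ) - 1) * W), hlow π hπ hcons n]⟩
    have hC : ∃ σ, Winning1 G' s₀ σ (TotalPayOff G' (2 * ((Fintype.card S : ℤ) - 1) * W)) :=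
      ⟨σ, hσ, fun π hπ hcons => totalPayOff_of_le fun n => by
        nlinarith [hEL π n, hlow π hπ hcons n]⟩
    exact ⟨iff_of_true hA (hAB hA), iff_of_true (hAB hA) hC, iff_of_true hC (hCD hC)⟩
  · have hlin : ∀ σ, IsStrat1 G' σ → ∃ π, IsPlay G' s₀ π ∧ Consistent1 G' σ π ∧
        ∀ n : ℕ, (n : ℤ) ≤ M + (Fintype.card S + 1) * ELp G' π n := fun σ hσ =>
      let ⟨π, hπ, hcons, h⟩ := hloss σ hσ
      ⟨π, hπ, hcons, fun n => hEL π n ▸ h n⟩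
    have hnB : ¬ ∃ σ, Winning1 G' s₀ σ (MeanPayOff G' 0) := fun ⟨σ, hσ, hwin⟩ =>
      let ⟨π, hπ, hcons, hlin⟩ := hlin σ hσ
      not_meanPayOff_of_linear (by positivity) hlin (hwin π hπ hcons)
    have hnD : ¬ ∃ t : ℤ, ∃ σ, Winning1 G' s₀ σ (TotalPayOff G' t) := fun ⟨t, σ, hσ, hwin⟩ =>
      let ⟨π, hπ, hcons, hlin⟩ := hlin σ hσ
      not_totalPayOff_of_linear (by positivity) hlin t (hwin π hπ hcons)
    exact ⟨iff_of_false (mt hAB hnB) hnB, iff_of_false hnB (mt hCD hnD),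
      iff_of_false (mt hCD hnD) hnD⟩

end
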